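/- Fix α ∈ (0, π) and x ∈ (0, π), and define g(s,u) := sin(x)·sin((s−α)/2)·sin((s+α)/2) / ( sin²((u−x)/2)·sin²((s+α)/2) + sin²((u+x)/2)·sin²((s−α)/2) ) on [0,2π]² minus the singular points ±(α, x). Then for every 0 ≤ η < 1, the function |g|^{1+η} is integrable on [0,2π]². -/

import Mathlib

/-!
Write `a = sin ((s - α) / 2)`, `b = sin ((s + α) / 2)`, `c = sin ((u - x) / 2)`,
`d = sin ((u + x) / 2)`, so that `g = sin x * a * b / (c² b² + d² a²)`.
Since `c² + d² = 1 - cos u cos x ≥ sin² x / 2`, one of `c²`, `d²` is at least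
`ε = sin² x / 4`. If `d² ≥ ε`, multiplying the AM-GM bound `c² b² + d² a² ≥ 2 |a b c d|`
by `c² b² + d² a² ≥ d² a²` gives `g² ≤ 1 / (2 ε² |a| |c|)`; symmetrically
`g² ≤ 1 / (2 ε² |b| |d|)` if `c² ≥ ε`. So `|g| ^ (1 + η)` is dominated by
`|a|ᵉ |c|ᵉ + |b|ᵉ |d|ᵉ` with `e = -(1 + η) / 2 > -1`, a sum of products of functions of one
variable. On `[0, 2π]` each factor has a single, simple zero (the chord bound for the concave
`sin` makes `|sin θ| ≳ |θ|` there), so it is integrable like `|t - β| ^ e`.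
-/

open Real MeasureTheory

noncomputable def gfun (α x s u : ℝ) : ℝ :=
  Real.sin x * Real.sin ((s - α) / 2) * Real.sin ((s + α) / 2) /
    (Real.sin ((u - x) / 2) ^ 2 * Real.sin ((s + α) / 2) ^ 2
      + Real.sin ((u + x) / 2) ^ 2 * Real.sin ((s - α) / 2) ^ 2)

open Set

lemma locallyIntegrable_abs_rpow {e : ℝ} (he : -1 < e) :
    LocallyIntegrable (fun t : ℝ => |t| ^ e) := by
  refine locallyIntegrable_of_norm_le_rpow (C := 1) (α := -e) (by simp) (by simp; linarith)
    (ae_of_all _ fun t => ?_)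
    (by fun_prop : Measurable fun t : ℝ => |t| ^ e).aestronglyMeasurable
  simp [Real.norm_eq_abs, abs_of_nonneg (rpow_nonneg (abs_nonneg t) e)]

lemma integrableOn_Icc_abs_sub_rpow {e : ℝ} (he : -1 < e) (c A B : ℝ) :
    IntegrableOn (fun t : ℝ => |t - c| ^ e) (Icc A B) := by
  rcases le_or_gt A B with hAB | hBA
  · have h := (((locallyIntegrable_abs_rpow he).integrableOn_isCompact
      isCompact_uIcc).intervalIntegrable (a := A - c) (b := B - c)).comp_sub_right c
    simp only [sub_add_cancel] at h
    exact (intervalIntegrable_iff_integrableOn_Icc_of_le hAB).1 h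
  · simp [Icc_eq_empty_of_lt hBA]

lemma mul_sin_le_sin_mul {l T : ℝ} (hl₀ : 0 ≤ l) (hl₁ : l ≤ 1) (hT₀ : 0 ≤ T) (hTπ : T ≤ π) :
    l * sin T ≤ sin (l * T) := by
  simpa using strictConcaveOn_sin_Icc.concaveOn.2 ⟨le_rfl, pi_pos.le⟩ ⟨hT₀, hTπ⟩
    (sub_nonneg.2 hl₁) hl₀ (sub_add_cancel 1 l)

lemma sin_div_mul_abs_le_abs_sin {θ T : ℝ} (hT₀ : 0 < T) (hTπ : T ≤ π) (hθ : |θ| ≤ T) :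
    sin T / T * |θ| ≤ |sin θ| := by
  have h := mul_sin_le_sin_mul (div_nonneg (abs_nonneg θ) hT₀.le) ((div_le_one hT₀).2 hθ)
    hT₀.le hTπ
  rw [div_mul_cancel₀ _ hT₀.ne', ← abs_sin_eq_sin_abs_of_abs_le_pi (hθ.trans hTπ)] at h
  calc sin T / T * |θ| = |θ| / T * sin T := by ring
    _ ≤ |sin θ| := h

lemma integrableOn_abs_sin_half_sub_rpow {e β : ℝ} (he : -1 < e) (he₀ : e ≤ 0)
    (hβ : β ∈ Ioo 0 (2 * π)) :
    IntegrableOn (fun t => |sin ((t - β) / 2)| ^ e) (Icc 0 (2 * π)) := by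
  obtain ⟨hβ₀, hβ₂⟩ := hβ
  set T := max β (2 * π - β) / 2
  have hT₀ : 0 < T := by positivity
  have hTπ : T < π := by
    simp only [T]; rw [div_lt_iff₀ two_pos, max_lt_iff]; constructor <;> linarith
  set k := sin T / T
  have hk : 0 < k := div_pos (sin_pos_of_pos_of_lt_pi hT₀ hTπ) hT₀
  refine ((integrableOn_Icc_abs_sub_rpow he β 0 (2 * π)).const_mul ((k / 2) ^ e)).mono'
    (by fun_prop : Measurable fun t => |sin ((t - β) / 2)| ^ e).aestronglyMeasurable ?_
  filter_upwards [ae_restrict_mem measurableSet_Icc,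
    ae_restrict_of_ae (compl_mem_ae_iff.2 (measure_singleton β))] with t ht htβ
  have hθ : |(t - β) / 2| ≤ T := by
    rw [abs_div, abs_two, div_le_div_iff_of_pos_right two_pos, abs_le]
    constructor <;>
      linarith [ht.1, ht.2, le_max_left β (2 * π - β), le_max_right β (2 * π - β)]
  have hpos : 0 < k / 2 * |t - β| :=
    mul_pos (half_pos hk) (abs_pos.2 (sub_ne_zero.2 htβ))
  have hlow : k / 2 * |t - β| ≤ |sin ((t - β) / 2)| := by
    calc k / 2 * |t - β| = k * |(t - β) / 2| := by rw [abs_div, abs_two]; ring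
      _ ≤ |sin ((t - β) / 2)| := sin_div_mul_abs_le_abs_sin hT₀ hTπ.le hθ
  rw [Real.norm_of_nonneg (rpow_nonneg (abs_nonneg _) e),
    ← mul_rpow (half_pos hk).le (abs_nonneg _)]
  exact rpow_le_rpow_of_nonpos hpos hlow he₀

lemma abs_sin_half_add_eq (t c : ℝ) : |sin ((t + c) / 2)| = |sin ((t - (2 * π - c)) / 2)| := by
  rw [show (t + c) / 2 = (t - (2 * π - c)) / 2 + π by ring, sin_add_pi, abs_neg]

lemma integrableOn_abs_sin_half_add_rpow {e β : ℝ} (he : -1 < e) (he₀ : e ≤ 0)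
    (hβ : β ∈ Ioo 0 (2 * π)) :
    IntegrableOn (fun t => |sin ((t + β) / 2)| ^ e) (Icc 0 (2 * π)) := by
  simp only [abs_sin_half_add_eq _ β]
  exact integrableOn_abs_sin_half_sub_rpow he he₀ ⟨by linarith [hβ.2], by linarith [hβ.1]⟩

lemma MeasureTheory.IntegrableOn.mul_prod {X Y : Type*}
    [MeasurableSpace X] [MeasurableSpace Y]
    {μ : Measure X} {ν : Measure Y} [SFinite μ] [SFinite ν] {f : X → ℝ} {g : Y → ℝ}
    {s : Set X} {t : Set Y} (hf : IntegrableOn f s μ) (hg : IntegrableOn g t ν) :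
    IntegrableOn (fun p => f p.1 * g p.2) (s ×ˢ t) (μ.prod ν) := by
  rw [IntegrableOn, ← Measure.prod_restrict]
  exact Integrable.mul_prod hf hg

lemma ae_sin_half_sub_ne_zero (c : ℝ) : ∀ᵐ t : ℝ, sin ((t - c) / 2) ≠ 0 := by
  have hcount : {t : ℝ | sin ((t - c) / 2) = 0}.Countable := by
    refine (countable_range fun n : ℤ => 2 * n * π + c).mono fun t ht => ?_
    obtain ⟨n, hn⟩ := sin_eq_zero_iff.1 ht
    exact ⟨n, by linarith⟩
  exact measure_eq_zero_iff_ae_notMem.1 (hcount.measure_zero volume)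

lemma ae_sin_half_ne_zero (c : ℝ) :
    ∀ᵐ t : ℝ, sin ((t - c) / 2) ≠ 0 ∧ sin ((t + c) / 2) ≠ 0 := by
  filter_upwards [ae_sin_half_sub_ne_zero c, ae_sin_half_sub_ne_zero (-c)] with t h₁ h₂
  exact ⟨h₁, by rwa [sub_neg_eq_add] at h₂⟩

lemma sin_sq_half_sub_add_sin_sq_half_add (u x : ℝ) :
    sin ((u - x) / 2) ^ 2 + sin ((u + x) / 2) ^ 2 = 1 - cos u * cos x := by
  rw [sin_sq_eq_half_sub, sin_sq_eq_half_sub, show 2 * ((u - x) / 2) = u - x by ring,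
    show 2 * ((u + x) / 2) = u + x by ring, cos_sub, cos_add]
  ring

lemma sin_sq_div_four_le (u x : ℝ) :
    sin x ^ 2 / 4 ≤ sin ((u - x) / 2) ^ 2 ∨ sin x ^ 2 / 4 ≤ sin ((u + x) / 2) ^ 2 := by
  have hsum := sin_sq_half_sub_add_sin_sq_half_add u x
  have hcos : cos u * cos x ≤ |cos x| := (le_abs_self _).trans <| by
    rw [abs_mul]; exact mul_le_of_le_one_left (abs_nonneg _) (abs_cos_le_one u)
  have hsin : sin x ^ 2 = 1 - |cos x| ^ 2 := by rw [sq_abs, sin_sq]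
  by_contra! h
  nlinarith [sq_nonneg (1 - |cos x|)]

lemma sq_mul_div_sq_add_sq_le {σ a b c d ε : ℝ} (hσ : |σ| ≤ 1) (hb : |b| ≤ 1)
    (hd : |d| ≤ 1) (ha : a ≠ 0) (hc : c ≠ 0) (hε₀ : 0 < ε) (hε : ε ≤ d ^ 2) :
    (σ * a * b / (c ^ 2 * b ^ 2 + d ^ 2 * a ^ 2)) ^ 2 ≤ (2 * ε ^ 2)⁻¹ * (|a| * |c|)⁻¹ := by
  set D := c ^ 2 * b ^ 2 + d ^ 2 * a ^ 2
  have hA : 0 < |a| := abs_pos.2 ha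
  have hDa : d ^ 2 * a ^ 2 ≤ D := le_add_of_nonneg_left (by positivity)
  have hD : 0 < D :=
    (mul_pos (hε₀.trans_le hε) (pow_pos hA 2 |>.trans_eq (sq_abs a))).trans_le hDa
  have amgm : 2 * (|a| * |b| * |c| * |d|) ≤ D := by
    nlinarith [sq_nonneg (|c| * |b| - |d| * |a|), sq_abs a, sq_abs b, sq_abs c, sq_abs d]
  have hσb : σ ^ 2 * |b| ≤ 1 := by
    nlinarith [sq_abs σ, abs_nonneg σ, abs_nonneg b]
  have hεd : ε ^ 2 ≤ |d| ^ 3 :=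
    calc ε ^ 2 ≤ (d ^ 2) ^ 2 := pow_le_pow_left₀ hε₀.le hε 2
      _ = |d| ^ 4 := by rw [← sq_abs d]; ring
      _ ≤ |d| ^ 3 := pow_le_pow_of_le_one (abs_nonneg d) hd (by norm_num)
  rw [div_pow, ← mul_inv, div_le_iff₀ (by positivity), inv_mul_eq_div,
    le_div_iff₀ (by positivity)]
  calc (σ * a * b) ^ 2 * (2 * ε ^ 2 * (|a| * |c|))
      = 2 * (|a| * |b| * |c|) * a ^ 2 * (σ ^ 2 * |b| * ε ^ 2) := by
        rw [mul_pow, mul_pow, ← sq_abs b]; ring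
    _ ≤ 2 * (|a| * |b| * |c|) * a ^ 2 * |d| ^ 3 := by
        gcongr
        exact (mul_le_of_le_one_left (sq_nonneg ε) hσb).trans hεd
    _ = 2 * (|a| * |b| * |c| * |d|) * (d ^ 2 * a ^ 2) := by rw [← sq_abs d]; ring
    _ ≤ D * D := mul_le_mul amgm hDa (by positivity) hD.le
    _ = D ^ 2 := (sq D).symm

lemma abs_rpow_le_of_sq_le {y C X r : ℝ} (hC : 0 ≤ C) (hX : 0 ≤ X) (hr : 0 ≤ r)
    (h : y ^ 2 ≤ C⁻¹ * X⁻¹) : |y| ^ r ≤ C ^ (-(r / 2)) * X ^ (-(r / 2)) := by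
  calc |y| ^ r = (y ^ 2) ^ (r / 2) := by
        rw [← sq_abs, ← rpow_natCast, ← rpow_mul (abs_nonneg y)]; ring_nf
    _ ≤ (C⁻¹ * X⁻¹) ^ (r / 2) := rpow_le_rpow (sq_nonneg y) h (by positivity)
    _ = C ^ (-(r / 2)) * X ^ (-(r / 2)) := by
        rw [mul_rpow (inv_nonneg.2 hC) (inv_nonneg.2 hX), inv_rpow hC, inv_rpow hX,
          rpow_neg hC, rpow_neg hX]

lemma abs_mul_div_sq_add_sq_rpow_le {σ a b c d ε r : ℝ} (hσ : |σ| ≤ 1)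
    (ha : a ≠ 0) (hb : b ≠ 0) (hc : c ≠ 0) (hd : d ≠ 0)
    (ha₁ : |a| ≤ 1) (hb₁ : |b| ≤ 1) (hc₁ : |c| ≤ 1) (hd₁ : |d| ≤ 1)
    (hε₀ : 0 < ε) (hε : ε ≤ c ^ 2 ∨ ε ≤ d ^ 2) (hr : 0 ≤ r) :
    |σ * a * b / (c ^ 2 * b ^ 2 + d ^ 2 * a ^ 2)| ^ r ≤ (2 * ε ^ 2) ^ (-(r / 2)) *
      (|a| ^ (-(r / 2)) * |c| ^ (-(r / 2)) + |b| ^ (-(r / 2)) * |d| ^ (-(r / 2))) := by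
  have hK : 0 ≤ 2 * ε ^ 2 := by positivity
  rcases hε with hεc | hεd
  · have h := sq_mul_div_sq_add_sq_le hσ ha₁ hc₁ hb hd hε₀ hεc
    rw [show σ * b * a / (d ^ 2 * a ^ 2 + c ^ 2 * b ^ 2) =
      σ * a * b / (c ^ 2 * b ^ 2 + d ^ 2 * a ^ 2) by ring_nf] at h
    refine (abs_rpow_le_of_sq_le hK (by positivity) hr h).trans ?_
    rw [mul_rpow (abs_nonneg b) (abs_nonneg d)]
    gcongr
    exact le_add_of_nonneg_left (by positivity)
  · have h := sq_mul_div_sq_add_sq_le hσ hb₁ hd₁ ha hc hε₀ hεd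
    refine (abs_rpow_le_of_sq_le hK (by positivity) hr h).trans ?_
    rw [mul_rpow (abs_nonneg a) (abs_nonneg c)]
    gcongr
    exact le_add_of_nonneg_right (by positivity)

theorem gfun_integrable (α x : ℝ) (hα : α ∈ Set.Ioo 0 π) (hx : x ∈ Set.Ioo 0 π)
    (η : ℝ) (hη0 : 0 ≤ η) (hη1 : η < 1) :
    MeasureTheory.IntegrableOn
      (fun p : ℝ × ℝ => |gfun α x p.1 p.2| ^ (1 + η))
      (Set.Icc (0 : ℝ) (2 * π) ×ˢ Set.Icc (0 : ℝ) (2 * π)) := by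
  have he : -1 < -((1 + η) / 2) := by linarith
  have he₀ : -((1 + η) / 2) ≤ 0 := by linarith
  set e := -((1 + η) / 2)
  have hα' : α ∈ Ioo 0 (2 * π) := ⟨hα.1, by linarith [hα.2, pi_pos]⟩
  have hx' : x ∈ Ioo 0 (2 * π) := ⟨hx.1, by linarith [hx.2, pi_pos]⟩
  have hε : 0 < sin x ^ 2 / 4 := by have := sin_pos_of_pos_of_lt_pi hx.1 hx.2; positivity
  have hdom : IntegrableOn (fun p : ℝ × ℝ => (2 * (sin x ^ 2 / 4) ^ 2) ^ e *
      (|sin ((p.1 - α) / 2)| ^ e * |sin ((p.2 - x) / 2)| ^ e +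
        |sin ((p.1 + α) / 2)| ^ e * |sin ((p.2 + x) / 2)| ^ e))
      (Icc (0 : ℝ) (2 * π) ×ˢ Icc (0 : ℝ) (2 * π)) :=
    (((integrableOn_abs_sin_half_sub_rpow he he₀ hα').mul_prod
      (integrableOn_abs_sin_half_sub_rpow he he₀ hx')).add
      ((integrableOn_abs_sin_half_add_rpow he he₀ hα').mul_prod
      (integrableOn_abs_sin_half_add_rpow he he₀ hx'))).const_mul _
  refine hdom.mono' (by unfold gfun; fun_prop : Measurable _).aestronglyMeasurable ?_
  filter_upwards
    [ae_restrict_of_ae (Measure.quasiMeasurePreserving_fst.ae (ae_sin_half_ne_zero α)),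
    ae_restrict_of_ae (Measure.quasiMeasurePreserving_snd.ae (ae_sin_half_ne_zero x))]
    with p ⟨ha, hb⟩ ⟨hc, hd⟩
  rw [Real.norm_of_nonneg (rpow_nonneg (abs_nonneg _) _)]
  exact abs_mul_div_sq_add_sq_rpow_le (abs_sin_le_one x) ha hb hc hd (abs_sin_le_one _)
    (abs_sin_le_one _) (abs_sin_le_one _) (abs_sin_le_one _) hε (sin_sq_div_four_le p.2 x)
    (by linarith)
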